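/- arXiv:2601.07586 — 5 statements merged into one kernel-verified Lean document; each statement's English description precedes it below -/
import Mathlib

section
/- Let V and Q be finite-dimensional real inner product spaces, let a : V × V → ℝ be a symmetric bilinear form that is coercive (there is α > 0 with a(v,v) ≥ α‖v‖² for all v ∈ V), let b : V × Q → ℝ be a bilinear form satisfying the inf-sup condition (there is β > 0 such that for every μ ∈ Q there exists v ∈ V with v ≠ 0 and b(v,μ) ≥ β‖v‖‖μ‖), let C ⊆ Q be a nonempty closed convex set, and let f : V → ℝ be a linear functional. Then there exists a pair (u, λ) ∈ V × C such that a(u,v) + b(v,λ) = f(v) for all v ∈ V, and b(u, μ − λ) ≤ 0 for all μ ∈ C. -/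
open scoped RealInnerProductSpace

set_option maxHeartbeats 1000000

/-- Riesz representation of a bilinear form in its first argument. -/
noncomputable def rieszMapAux {V Q : Type*}
    [NormedAddCommGroup V] [InnerProductSpace ℝ V] [FiniteDimensional ℝ V]
    [NormedAddCommGroup Q] [InnerProductSpace ℝ Q]
    (b : Q →ₗ[ℝ] V →ₗ[ℝ] ℝ) : Q →ₗ[ℝ] V where
  toFun μ := (InnerProductSpace.toDual ℝ V).symm (LinearMap.toContinuousLinearMap (b μ))
  map_add' x y := by
    apply ext_inner_right ℝ
    intro w
    simp [InnerProductSpace.toDual_symm_apply, inner_add_left]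
  map_smul' c x := by
    apply ext_inner_right ℝ
    intro w
    simp [InnerProductSpace.toDual_symm_apply, real_inner_smul_left]

theorem rieszMapAux_inner {V Q : Type*}
    [NormedAddCommGroup V] [InnerProductSpace ℝ V] [FiniteDimensional ℝ V]
    [NormedAddCommGroup Q] [InnerProductSpace ℝ Q]
    (b : Q →ₗ[ℝ] V →ₗ[ℝ] ℝ) (μ : Q) (w : V) :
    ⟪rieszMapAux b μ, w⟫ = b μ w := by
  simp [rieszMapAux, InnerProductSpace.toDual_symm_apply]

/-- Abstract saddle-point variational inequality: existence of a solution
`(u, λ)` with `λ` in a nonempty closed convex set `C`, for a symmetric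
coercive bilinear form `a`, a bilinear form `b` satisfying an inf-sup
condition, and a linear load functional `f`. -/
theorem exists_saddle_point_solution
    {V Q : Type*}
    [NormedAddCommGroup V] [InnerProductSpace ℝ V] [FiniteDimensional ℝ V]
    [NormedAddCommGroup Q] [InnerProductSpace ℝ Q] [FiniteDimensional ℝ Q]
    (a : V →ₗ[ℝ] V →ₗ[ℝ] ℝ)
    (ha_symm : ∀ u v : V, a u v = a v u)
    (α : ℝ) (hα : 0 < α)
    (ha_coer : ∀ v : V, α * ‖v‖ ^ 2 ≤ a v v)
    (b : V →ₗ[ℝ] Q →ₗ[ℝ] ℝ)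
    (β : ℝ) (hβ : 0 < β)
    (hb_infsup : ∀ μ : Q, ∃ v : V, v ≠ 0 ∧ β * ‖v‖ * ‖μ‖ ≤ b v μ)
    (C : Set Q) (hC_ne : C.Nonempty) (hC_closed : IsClosed C) (hC_convex : Convex ℝ C)
    (f : V →ₗ[ℝ] ℝ) :
    ∃ (u : V) (lam : Q), lam ∈ C ∧
      (∀ v : V, a u v + b v lam = f v) ∧
      (∀ μ ∈ C, b u (μ - lam) ≤ 0) := by
  -- Lax–Milgram equivalence for the coercive form `a`, plus a bound for `a`
  obtain ⟨E, hE, M, hM, ha_bound⟩ :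
      ∃ E : V ≃L[ℝ] V, (∀ v w : V, ⟪E v, w⟫ = a v w) ∧
        ∃ M : ℝ, 0 < M ∧ ∀ v w : V, a v w ≤ M * ‖v‖ * ‖w‖ := by
    set A2 : V →L[ℝ] V →L[ℝ] ℝ :=
      LinearMap.toContinuousLinearMap
        ((LinearMap.toContinuousLinearMap :
          (V →ₗ[ℝ] ℝ) ≃ₗ[ℝ] (V →L[ℝ] ℝ)).toLinearMap.comp a) with hA2
    have hA2_apply : ∀ v w : V, A2 v w = a v w := fun v w => rfl
    have coercive : IsCoercive A2 := by
      refine ⟨α, hα, fun u => ?_⟩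
      have := ha_coer u
      rw [hA2_apply]
      nlinarith [this]
    refine ⟨coercive.continuousLinearEquivOfBilin, fun v w =>
      (coercive.continuousLinearEquivOfBilin_apply v w).trans (hA2_apply v w),
      ‖A2‖ + 1, by positivity, fun v w => ?_⟩
    have h1 : ‖A2 v w‖ ≤ ‖A2‖ * ‖v‖ * ‖w‖ := A2.le_opNorm₂ v w
    have h2 : a v w ≤ ‖A2‖ * ‖v‖ * ‖w‖ := by
      rw [← hA2_apply]
      exact (le_abs_self _).trans (by simpa using h1)
    nlinarith [norm_nonneg v, norm_nonneg w]
  -- Riesz representations of `b` and `f`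
  obtain ⟨Bm, hBm⟩ : ∃ Bm : Q →ₗ[ℝ] V, ∀ (μ : Q) (w : V), ⟪Bm μ, w⟫ = b w μ :=
    ⟨rieszMapAux b.flip, fun μ w => rieszMapAux_inner b.flip μ w⟩
  obtain ⟨F, hF⟩ : ∃ F : V, ∀ w : V, ⟪F, w⟫ = f w :=
    ⟨(InnerProductSpace.toDual ℝ V).symm (LinearMap.toContinuousLinearMap f), fun w => by
      simp [InnerProductSpace.toDual_symm_apply]⟩
  -- basic facts about the quadratic form  q x = ⟪E⁻¹ x, x⟫
  have hq_eq : ∀ x : V, ⟪E.symm x, x⟫ = a (E.symm x) (E.symm x) := by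
    intro x
    conv_lhs => rw [real_inner_comm]
    rw [← hE (E.symm x) (E.symm x), E.apply_symm_apply]
  have hq_nonneg : ∀ x : V, 0 ≤ ⟪E.symm x, x⟫ := by
    intro x
    rw [hq_eq]
    have := ha_coer (E.symm x)
    nlinarith [sq_nonneg ‖(E.symm x : V)‖]
  have hnorm : ∀ x : V, ‖x‖ ≤ M * ‖E.symm x‖ := by
    intro x
    rcases eq_or_lt_of_le (norm_nonneg x) with h0 | h0
    · rw [← h0]; positivity
    · have h1 : ‖x‖ ^ 2 = a (E.symm x) x := by
        rw [← real_inner_self_eq_norm_sq, ← hE, E.apply_symm_apply]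
      have h2 := ha_bound (E.symm x) x
      have h3 : ‖x‖ * ‖x‖ ≤ (M * ‖E.symm x‖) * ‖x‖ := by nlinarith
      exact le_of_mul_le_mul_right h3 h0
  have hq_lb : ∀ x : V, α / M ^ 2 * ‖x‖ ^ 2 ≤ ⟪E.symm x, x⟫ := by
    intro x
    rw [hq_eq]
    have h1 := ha_coer (E.symm x)
    have h2 := hnorm x
    rw [div_mul_eq_mul_div, div_le_iff₀ (by positivity)]
    have hx2 : ‖x‖ ^ 2 ≤ M ^ 2 * ‖E.symm x‖ ^ 2 := by
      nlinarith [norm_nonneg x, norm_nonneg (E.symm x : V)]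
    nlinarith [mul_le_mul_of_nonneg_left hx2 hα.le, mul_le_mul_of_nonneg_left h1 (sq_nonneg M)]
  set c : ℝ := α / M ^ 2 with hcdef
  have hc : 0 < c := by positivity
  -- inf-sup gives lower bound on ‖Bm μ‖
  have hB_lb : ∀ μ : Q, β * ‖μ‖ ≤ ‖Bm μ‖ := by
    intro μ
    obtain ⟨v, hv0, hv⟩ := hb_infsup μ
    have hvpos : 0 < ‖v‖ := norm_pos_iff.mpr hv0
    have h1 : b v μ ≤ ‖Bm μ‖ * ‖v‖ := by
      rw [← hBm]; exact real_inner_le_norm _ _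
    have h2 : (β * ‖μ‖) * ‖v‖ ≤ ‖Bm μ‖ * ‖v‖ := by nlinarith
    exact le_of_mul_le_mul_right h2 hvpos
  -- the dual functional
  set h : Q → ℝ := fun μ => ⟪E.symm (F - Bm μ), F - Bm μ⟫ with hhdef
  have h_cont : Continuous h := by
    have hBc : Continuous fun μ : Q => F - Bm μ :=
      continuous_const.sub Bm.continuous_of_finiteDimensional
    exact Continuous.inner (E.symm.continuous.comp hBc) hBc
  obtain ⟨μ₀, hμ₀⟩ := hC_ne
  have h_nonneg : ∀ μ, 0 ≤ h μ := fun μ => hq_nonneg _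
  -- coercivity of h
  set t₀ : ℝ := Real.sqrt ((h μ₀ + 1) / c) with ht₀def
  have ht₀ : 0 ≤ t₀ := Real.sqrt_nonneg _
  have ht₀sq : t₀ ^ 2 = (h μ₀ + 1) / c := by
    rw [ht₀def, Real.sq_sqrt (div_nonneg (by linarith [h_nonneg μ₀]) hc.le)]
  set R : ℝ := max ‖μ₀‖ ((‖F‖ + t₀) / β) with hRdef
  have hcoerc : ∀ μ : Q, R < ‖μ‖ → h μ₀ < h μ := by
    intro μ hμ
    have h1 : (‖F‖ + t₀) / β ≤ R := le_max_right _ _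
    have h2 : ‖F‖ + t₀ ≤ β * R := by
      rw [div_le_iff₀ hβ] at h1; linarith [h1]
    have h3 : t₀ < ‖F - Bm μ‖ := by
      have := hB_lb μ
      have h4 : ‖Bm μ‖ - ‖F‖ ≤ ‖F - Bm μ‖ := by
        have := norm_sub_norm_le (Bm μ) F
        rw [norm_sub_rev] at this
        linarith [abs_le.mp (abs_norm_sub_norm_le (Bm μ) F)]
      nlinarith
    have h5 : c * t₀ ^ 2 < c * ‖F - Bm μ‖ ^ 2 :=
      mul_lt_mul_of_pos_left (by nlinarith) hc
    have h6 := hq_lb (F - Bm μ)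
    rw [ht₀sq, mul_div_cancel₀ _ (ne_of_gt hc)] at h5
    calc h μ₀ < h μ₀ + 1 := by linarith
      _ < c * ‖F - Bm μ‖ ^ 2 := h5
      _ ≤ h μ := h6
  -- minimize h on the compact set C ∩ closedBall 0 R
  have hcomp : IsCompact (C ∩ Metric.closedBall (0 : Q) R) :=
    (isCompact_closedBall (0 : Q) R).inter_left hC_closed
  have hne : (C ∩ Metric.closedBall (0 : Q) R).Nonempty :=
    ⟨μ₀, hμ₀, by rw [Metric.mem_closedBall, dist_zero_right]; exact le_max_left _ _⟩
  obtain ⟨lam, hlam, hmin⟩ := hcomp.exists_isMinOn hne h_cont.continuousOn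
  have hlamC : lam ∈ C := hlam.1
  have hglob : ∀ μ ∈ C, h lam ≤ h μ := by
    intro μ hμ
    by_cases hR : ‖μ‖ ≤ R
    · exact hmin ⟨hμ, by simpa [Metric.mem_closedBall, dist_zero_right] using hR⟩
    · have := hcoerc μ (lt_of_not_ge hR)
      have hl : h lam ≤ h μ₀ := hmin ⟨hμ₀, by
        rw [Metric.mem_closedBall, dist_zero_right]; exact le_max_left _ _⟩
      linarith
  -- the solution
  set x₀ : V := F - Bm lam with hx₀def
  set u : V := E.symm x₀ with hudef
  have hEu : E u = x₀ := E.apply_symm_apply x₀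
  refine ⟨u, lam, hlamC, ?_, ?_⟩
  · intro v
    have : a u v = ⟪x₀, v⟫ := by rw [← hE, hEu]
    rw [this, hx₀def, inner_sub_left, hF, hBm]
    ring
  · intro μ hμ
    set y : V := Bm (μ - lam) with hydef
    have hby : b u (μ - lam) = ⟪u, y⟫ := by rw [hydef, ← hBm, real_inner_comm]
    rw [hby]
    by_contra hp'
    push_neg at hp'
    set p : ℝ := ⟪u, y⟫ with hpdef
    set q' : ℝ := ⟪E.symm y, y⟫ with hq'def
    have hq'0 : 0 ≤ q' := hq_nonneg y
    set t : ℝ := min 1 (p / (q' + 1)) with htdef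
    have ht0 : 0 < t := lt_min one_pos (by positivity)
    have ht1 : t ≤ 1 := min_le_left _ _
    have htle : t * (q' + 1) ≤ p := by
      have := min_le_right 1 (p / (q' + 1))
      calc t * (q' + 1) ≤ (p / (q' + 1)) * (q' + 1) := by nlinarith
        _ = p := div_mul_cancel₀ _ (by positivity)
    have hmem : lam + t • (μ - lam) ∈ C :=
      hC_convex.add_smul_sub_mem hlamC hμ ⟨le_of_lt ht0, ht1⟩
    have hhle := hglob _ hmem
    -- expand h (lam + t • (μ - lam))
    have hxt : F - Bm (lam + t • (μ - lam)) = x₀ - t • y := by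
      rw [map_add, map_smul, hydef, hx₀def]
      abel
    have hsy : ⟪E.symm y, x₀⟫ = p := by
      rw [← hEu, real_inner_comm, hE, ha_symm, ← hE, E.apply_symm_apply, real_inner_comm]
    have hexp : h (lam + t • (μ - lam)) = h lam - 2 * t * p + t ^ 2 * q' := by
      have hlam_eq : h lam = ⟪u, x₀⟫ := rfl
      have h1 : h (lam + t • (μ - lam)) = ⟪E.symm (x₀ - t • y), x₀ - t • y⟫ := by
        show ⟪E.symm (F - Bm (lam + t • (μ - lam))), F - Bm (lam + t • (μ - lam))⟫ = _
        rw [hxt]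
      rw [h1, hlam_eq]
      simp only [map_sub, map_smul, inner_sub_left, inner_sub_right,
        real_inner_smul_left, real_inner_smul_right, hsy]
      simp only [← hudef, ← hpdef, ← hq'def]
      ring
    rw [hexp] at hhle
    nlinarith
end

section
/- Let V be a real inner product space, Q a real vector space, a : V × V → ℝ a bilinear form that is coercive (there is α > 0 with a(v,v) ≥ α‖v‖² for all v ∈ V), b : V × Q → ℝ a bilinear form, C ⊆ Q a subset, and f : V → ℝ a linear functional. Suppose (u₁, λ₁) and (u₂, λ₂) in V × C both satisfy: a(uᵢ, v) + b(v, λᵢ) = f(v) for all v ∈ V, and b(uᵢ, μ − λᵢ) ≤ 0 for all μ ∈ C (i = 1, 2). Then u₁ = u₂. If moreover b is nondegenerate in its second argument (for μ ∈ Q, if b(v, μ) = 0 for all v ∈ V then μ = 0), then also λ₁ = λ₂. -/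
open scoped RealInnerProductSpace

/-- Uniqueness for the abstract mixed variational inequality: coercivity of `a`
gives uniqueness of the displacement, and nondegeneracy of `b` in its second
argument gives uniqueness of the Lagrange multiplier. -/
theorem saddle_point_solution_unique
    {V Q : Type*}
    [NormedAddCommGroup V] [InnerProductSpace ℝ V]
    [AddCommGroup Q] [Module ℝ Q]
    (a : V →ₗ[ℝ] V →ₗ[ℝ] ℝ)
    (α : ℝ) (hα : 0 < α)
    (ha_coer : ∀ v : V, α * ‖v‖ ^ 2 ≤ a v v)
    (b : V →ₗ[ℝ] Q →ₗ[ℝ] ℝ)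
    (C : Set Q)
    (f : V →ₗ[ℝ] ℝ)
    (u₁ u₂ : V) (lam₁ lam₂ : Q)
    (hlam₁ : lam₁ ∈ C) (hlam₂ : lam₂ ∈ C)
    (heq₁ : ∀ v : V, a u₁ v + b v lam₁ = f v)
    (hineq₁ : ∀ μ ∈ C, b u₁ (μ - lam₁) ≤ 0)
    (heq₂ : ∀ v : V, a u₂ v + b v lam₂ = f v)
    (hineq₂ : ∀ μ ∈ C, b u₂ (μ - lam₂) ≤ 0) :
    u₁ = u₂ ∧
      ((∀ μ : Q, (∀ v : V, b v μ = 0) → μ = 0) → lam₁ = lam₂) := by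
  set w := u₁ - u₂ with hw
  have hdiff : ∀ v : V, a w v + b v (lam₁ - lam₂) = 0 := by
    intro v
    have h1 := heq₁ v
    have h2 := heq₂ v
    simp only [hw, map_sub, LinearMap.sub_apply]
    linarith
  have h1 := hineq₁ lam₂ hlam₂
  have h2 := hineq₂ lam₁ hlam₁
  have hbw : 0 ≤ b w (lam₁ - lam₂) := by
    simp only [hw, map_sub, LinearMap.sub_apply] at h1 h2 ⊢
    linarith
  have haww : a w w ≤ 0 := by
    have := hdiff w
    linarith
  have hwnorm : ‖w‖ ^ 2 ≤ 0 := by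
    have := ha_coer w
    nlinarith
  have hw0 : w = 0 := by
    have : ‖w‖ = 0 := by nlinarith [norm_nonneg w, sq_nonneg ‖w‖]
    simpa using this
  have hu : u₁ = u₂ := sub_eq_zero.mp hw0
  refine ⟨hu, fun hnd => ?_⟩
  have : lam₁ - lam₂ = 0 := by
    apply hnd
    intro v
    have := hdiff v
    rw [hw0] at this
    simpa using this
  exact sub_eq_zero.mp this
end

section
/- Let E be a real inner product space and n ∈ E a unit vector. For x ∈ E, write x_n = ⟪x, n⟫ (normal component) and x_τ = x − ⟪x, n⟫ • n (tangential part). Let g ≥ 0 and λ ∈ E. Then the following are equivalent: (i) λ_n ≥ 0 and ‖λ_τ‖ ≤ g; (ii) for every v ∈ E with v_n ≤ 0 one has ⟪λ, v⟫ ≤ g‖v_τ‖. -/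
open scoped RealInnerProductSpace

/-!
Splitting along the unit normal gives `⟪λ, v⟫ = λₙ vₙ + ⟪λ_τ, v_τ⟫`, so (i) implies (ii) by
Cauchy–Schwarz. Conversely, testing (ii) with `v = -n` gives `λₙ ≥ 0`, and testing it with the
tangential vector `v = λ_τ` gives `‖λ_τ‖² ≤ g ‖λ_τ‖`.
-/

section UnitNormal

variable {E : Type*} [NormedAddCommGroup E] [InnerProductSpace ℝ E] {n : E}

theorem real_inner_tangential_normal_eq_zero (hn : ‖n‖ = 1) (x : E) :
    ⟪x - ⟪x, n⟫ • n, n⟫ = 0 := by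
  rw [inner_sub_left, real_inner_smul_left, inner_self_eq_one_of_norm_eq_one hn, mul_one,
    sub_self]

theorem real_inner_eq_normal_mul_add_tangential (hn : ‖n‖ = 1) (x y : E) :
    ⟪x, y⟫ = ⟪x, n⟫ * ⟪y, n⟫ + ⟪x - ⟪x, n⟫ • n, y - ⟪y, n⟫ • n⟫ := by
  simp only [inner_sub_left, inner_sub_right, real_inner_smul_left, real_inner_smul_right,
    inner_self_eq_one_of_norm_eq_one hn, real_inner_comm n]
  ring

theorem real_inner_tangential_right (hn : ‖n‖ = 1) (x : E) :
    ⟪x, x - ⟪x, n⟫ • n⟫ = ‖x - ⟪x, n⟫ • n‖ ^ 2 := by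
  rw [real_inner_eq_normal_mul_add_tangential hn, real_inner_tangential_normal_eq_zero hn, zero_smul,
    sub_zero, mul_zero, zero_add, real_inner_self_eq_norm_sq]

end UnitNormal

theorem le_of_sq_le_mul_self {a g : ℝ} (hg : 0 ≤ g) (h : a ^ 2 ≤ g * a) : a ≤ g := by
  nlinarith

/-- Pointwise characterization of the Tresca dual cone: `λ` has nonnegative
normal component and tangential part bounded by `g` if and only if
`⟪λ, v⟫ ≤ g‖v_τ‖` for every `v` with nonpositive normal component. -/
theorem tresca_dual_cone_characterization
    {E : Type*} [NormedAddCommGroup E] [InnerProductSpace ℝ E]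
    (n : E) (hn : ‖n‖ = 1) (g : ℝ) (hg : 0 ≤ g) (lam : E) :
    (0 ≤ ⟪lam, n⟫ ∧ ‖lam - ⟪lam, n⟫ • n‖ ≤ g) ↔
      (∀ v : E, ⟪v, n⟫ ≤ 0 → ⟪lam, v⟫ ≤ g * ‖v - ⟪v, n⟫ • n‖) := by
  constructor
  · rintro ⟨hnormal, htangential⟩ v hv
    calc ⟪lam, v⟫
        = ⟪lam, n⟫ * ⟪v, n⟫ + ⟪lam - ⟪lam, n⟫ • n, v - ⟪v, n⟫ • n⟫ :=
          real_inner_eq_normal_mul_add_tangential hn lam v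
      _ ≤ 0 + ‖lam - ⟪lam, n⟫ • n‖ * ‖v - ⟪v, n⟫ • n‖ :=
          add_le_add (mul_nonpos_of_nonneg_of_nonpos hnormal hv) (real_inner_le_norm _ _)
      _ ≤ g * ‖v - ⟪v, n⟫ • n‖ := by
          rw [zero_add]
          gcongr
  · intro h
    refine ⟨?_, le_of_sq_le_mul_self hg ?_⟩
    · simpa [hn] using h (-n) (by simp [hn])
    · have htn := real_inner_tangential_normal_eq_zero hn lam
      have htest := h _ htn.le
      rwa [htn, zero_smul, sub_zero, real_inner_tangential_right hn] at htest
end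

section
/- Let E be a real inner product space, let λ, u ∈ E, g ≥ 0, β > 0, and set z = λ + β • u. Then the following are equivalent: (i) either ‖z‖ ≤ g and λ = z, or ‖z‖ > g and λ = (g/‖z‖) • z; (ii) ‖λ‖ ≤ g and ⟪λ, u⟫ = g‖u‖. -/
/-!
Both conditions say that `λ` and `u` point the same way. Cauchy–Schwarz turns (ii) into:
`u = 0` and `‖λ‖ ≤ g`, or `‖λ‖ = g` and `λ`, `u` lie on a common ray. In the second case
`‖λ + β • u‖ = g + β ‖u‖ > g`, and rescaling `λ + β • u` to norm `g` gives back `λ`. Conversely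
the projection `(g / ‖z‖) • z` and the remainder `z - (g / ‖z‖) • z = β • u` are nonnegative
multiples of `z`.
-/

open scoped RealInnerProductSpace

theorem sameRay_pos_smul_right_iff {R M : Type*} [Field R] [LinearOrder R] [IsStrictOrderedRing R]
    [AddCommGroup M] [Module R M] {x y : M} {a : R} (ha : 0 < a) :
    SameRay R x (a • y) ↔ SameRay R x y :=
  ⟨fun h => inv_smul_smul₀ ha.ne' y ▸ h.pos_smul_right (inv_pos.2 ha),
    fun h => h.pos_smul_right ha⟩

section InnerProductSpace

variable {E : Type*} [NormedAddCommGroup E] [InnerProductSpace ℝ E] {x y : E} {g : ℝ}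

theorem sameRay_iff_inner_eq_norm_mul : SameRay ℝ x y ↔ ⟪x, y⟫ = ‖x‖ * ‖y‖ := by
  rw [inner_eq_norm_mul_iff_real, sameRay_iff_norm_smul_eq, eq_comm]

theorem inner_eq_mul_norm_iff_of_norm_le (hx : ‖x‖ ≤ g) :
    ⟪x, y⟫ = g * ‖y‖ ↔ y = 0 ∨ (‖x‖ = g ∧ SameRay ℝ x y) := by
  constructor
  · intro h
    rcases eq_or_ne y 0 with hy | hy
    · exact Or.inl hy
    have hgx : g * ‖y‖ ≤ ‖x‖ * ‖y‖ := h ▸ real_inner_le_norm x y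
    have hxg : ‖x‖ = g := le_antisymm hx (le_of_mul_le_mul_right hgx (norm_pos_iff.2 hy))
    exact Or.inr ⟨hxg, sameRay_iff_inner_eq_norm_mul.2 (hxg ▸ h)⟩
  · rintro (rfl | ⟨rfl, hxy⟩)
    · simp
    · exact sameRay_iff_inner_eq_norm_mul.1 hxy

end InnerProductSpace

section NormedSpace

variable {E : Type*} [NormedAddCommGroup E] [NormedSpace ℝ E] {x y z : E} {g : ℝ}

theorem SameRay.eq_div_norm_add_smul (h : SameRay ℝ x y) : x = (‖x‖ / ‖x + y‖) • (x + y) := by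
  rcases eq_or_ne (x + y) 0 with hxy | hxy
  · have hx : ‖x‖ = 0 := by
      linarith [h.norm_add, norm_nonneg x, norm_nonneg y, norm_eq_zero.2 hxy]
    simp [norm_eq_zero.1 hx]
  · rw [div_eq_inv_mul, mul_smul, (SameRay.rfl.add_right h).norm_smul_eq,
      inv_smul_smul₀ (norm_ne_zero_iff.2 hxy)]

theorem sameRay_div_norm_smul_sub (hg : 0 ≤ g) (hgz : g ≤ ‖z‖) :
    SameRay ℝ ((g / ‖z‖) • z) (z - (g / ‖z‖) • z) := by
  have hc : g / ‖z‖ ≤ 1 := div_le_one_of_le₀ hgz (norm_nonneg z)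
  rw [show z - (g / ‖z‖) • z = (1 - g / ‖z‖) • z by rw [sub_smul, one_smul]]
  exact sameRay_smul_smul_of_mul_nonneg
    (mul_nonneg (div_nonneg hg (norm_nonneg z)) (sub_nonneg.2 hc))

theorem norm_div_norm_smul (hg : 0 ≤ g) (hz : z ≠ 0) : ‖(g / ‖z‖) • z‖ = g := by
  rw [norm_smul, Real.norm_of_nonneg (div_nonneg hg (norm_nonneg z)),
    div_mul_cancel₀ g (norm_ne_zero_iff.2 hz)]

theorem eq_ball_projection_add_iff (hg : 0 ≤ g) :
    ((‖x + y‖ ≤ g ∧ x = x + y) ∨ (g < ‖x + y‖ ∧ x = (g / ‖x + y‖) • (x + y))) ↔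
      ‖x‖ ≤ g ∧ (y = 0 ∨ (‖x‖ = g ∧ SameRay ℝ x y)) := by
  constructor
  · rintro (⟨hle, hx⟩ | ⟨hlt, hx⟩)
    · have hy : y = 0 := left_eq_add.1 hx
      exact ⟨hx ▸ hle, Or.inl hy⟩
    · have hz : x + y ≠ 0 := norm_pos_iff.1 (hg.trans_lt hlt)
      have hxg : ‖x‖ = g := hx ▸ norm_div_norm_smul hg hz
      have hxy : SameRay ℝ x y := by
        simpa [← hx] using sameRay_div_norm_smul_sub hg hlt.le
      exact ⟨hxg.le, Or.inr ⟨hxg, hxy⟩⟩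
  · rintro ⟨hle, rfl | ⟨rfl, hxy⟩⟩
    · exact Or.inl ⟨by simpa using hle, (add_zero x).symm⟩
    · rcases eq_or_ne y 0 with rfl | hy
      · exact Or.inl ⟨by simp, (add_zero x).symm⟩
      refine Or.inr ⟨?_, hxy.eq_div_norm_add_smul⟩
      rw [hxy.norm_add]
      exact lt_add_of_pos_right _ (norm_pos_iff.2 hy)

end NormedSpace

/-- The Tresca friction conditions for the tangential components are equivalent
to the fixed-point equation `λ = [λ + β • u]_g`, where `[·]_g` is the
projection onto the closed ball of radius `g` centered at the origin. -/
theorem tresca_tangential_iff_ball_projection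
    {E : Type*} [NormedAddCommGroup E] [InnerProductSpace ℝ E]
    (lam u : E) (g β : ℝ) (hg : 0 ≤ g) (hβ : 0 < β)
    (z : E) (hz : z = lam + β • u) :
    ((‖z‖ ≤ g ∧ lam = z) ∨ (g < ‖z‖ ∧ lam = (g / ‖z‖) • z)) ↔
      (‖lam‖ ≤ g ∧ ⟪lam, u⟫ = g * ‖u‖) := by
  subst hz
  rw [eq_ball_projection_add_iff hg, smul_eq_zero_iff_right hβ.ne',
    sameRay_pos_smul_right_iff hβ]
  exact and_congr_right fun hle => (inner_eq_mul_norm_iff_of_norm_le hle).symm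
end

section
/- Let V be a real inner product space, Q a real vector space, b : V × Q → ℝ a bilinear form, C ⊆ Q a subset, and F : V → ℝ a linear functional. Suppose (u, λ) ∈ V × C satisfies ⟪u, v⟫ + b(v, λ) = F(v) for all v ∈ V, and b(u, μ − λ) ≤ 0 for all μ ∈ C. Then for every w ∈ V and every λ̃ ∈ C one has ‖u − w‖² ≤ F(u − w) − ⟪w, u − w⟫ − b(u − w, λ̃) + b(w, λ − λ̃). -/
open scoped RealInnerProductSpace

/-- Abstract first step of the proof of the abstract error estimate: if
`(u, λ)` solves the mixed variational inequality with energy inner product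
`⟪·,·⟫`, pairing `b`, admissible set `C`, and load `F`, then for every `w ∈ V`
and every `λ̃ ∈ C`,
`‖u − w‖² ≤ F(u − w) − ⟪w, u − w⟫ − b(u − w, λ̃) + b(w, λ − λ̃)`. -/
theorem abstract_energy_error_bound
    {V Q : Type*}
    [NormedAddCommGroup V] [InnerProductSpace ℝ V]
    [AddCommGroup Q] [Module ℝ Q]
    (b : V →ₗ[ℝ] Q →ₗ[ℝ] ℝ)
    (C : Set Q)
    (F : V →ₗ[ℝ] ℝ)
    (u : V) (lam : Q) (hlam : lam ∈ C)
    (heq : ∀ v : V, ⟪u, v⟫ + b v lam = F v)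
    (hineq : ∀ μ ∈ C, b u (μ - lam) ≤ 0) :
    ∀ w : V, ∀ lamt ∈ C,
      ‖u - w‖ ^ 2 ≤
        F (u - w) - ⟪w, u - w⟫ - b (u - w) lamt + b w (lam - lamt) := by
  intro w lamt hlamt
  have h1 : ‖u - w‖ ^ 2 = ⟪u, u - w⟫ - ⟪w, u - w⟫ := by
    rw [← real_inner_self_eq_norm_sq, ← inner_sub_left]
  have h2 : ⟪u, u - w⟫ = F (u - w) - b (u - w) lam := by
    have := heq (u - w); linarith
  have h3 : (0 : ℝ) ≤ b u (lam - lamt) := by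
    have := hineq lamt hlamt
    have : b u (lamt - lam) ≤ 0 := this
    have e : b u (lam - lamt) = - b u (lamt - lam) := by
      rw [← map_neg, neg_sub]
    linarith [e ▸ neg_nonneg.mpr this]
  have h4 : b (u - w) lam - b (u - w) lamt + b w (lam - lamt) = b u (lam - lamt) := by
    simp [map_sub, LinearMap.sub_apply]; ring
  linarith [h1, h2, h3, h4]
end
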